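/- Let n ≥ 1 be an odd natural number and Ω > 0. Then the origin is an unstable equilibrium of the shifted odd system: there exist ζ₀ > 0 and ε > 0 such that for every δ > 0 there exist a solution x = (x₁, x₂) of the shifted odd system defined on some interval [ζ₀, ζ₁] with 0 < ‖x(ζ₀)‖ < δ and ‖x(ζ₁)‖ ≥ ε. -/

import Mathlib

/-!
Start at ζ = 1 from rest at x₁ = a > 0. In the variable u = ζ² x₂ the system reads
x₁' = u / ζ², u' = ζ² F(x₁) with F(p) = (Ω (p + Ω^{-1/n})ⁿ - 1) / (n + 1). Since F(0) = 0 and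
F is increasing on [0, ∞), F(x₁) ≥ F(a) > 0 as long as x₁ ≥ a, so u ≥ F(a) (ζ³ - 1) / 3 and
x₁ ≥ a + F(a) (ζ - 1)² / 6: however small a is, x₁ reaches 1 in finite time.
To have a solution on a long enough interval, the field is first truncated (x₁ to [a, 1],
u to [0, M]) so that it is globally Lipschitz and bounded; the same estimates show that the
truncation is inactive until x₁ first reaches 1.
-/

open Set
open scoped NNReal

/-- A solution on [ζ₀, ζ₁] of the shifted odd system arising from the
generalized Lane–Emden equation with γ = 1 + 1/n: x₁′ = x₂,
x₂′ = (1/(n+1))·(Ω·(x₁ + Ω^{−1/n})ⁿ − 1) − 2x₂/ζ. -/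
def IsSolShiftedOddOn (n : ℕ) (Ω ζ₀ ζ₁ : ℝ) (x₁ x₂ : ℝ → ℝ) : Prop :=
  ∀ ζ ∈ Set.Icc ζ₀ ζ₁,
    HasDerivWithinAt x₁ (x₂ ζ) (Set.Icc ζ₀ ζ₁) ζ ∧
    HasDerivWithinAt x₂
      ((1 / ((n : ℝ) + 1)) * (Ω * (x₁ ζ + Ω ^ (-1 / (n : ℝ))) ^ n - 1)
        - 2 * x₂ ζ / ζ)
      (Set.Icc ζ₀ ζ₁) ζ

theorem exists_forall_mem_Icc_hasDerivWithinAt_of_lipschitzWith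
    {E : Type*} [NormedAddCommGroup E] [NormedSpace ℝ E] [CompleteSpace E]
    {v : ℝ → E → E} {t₀ T : ℝ} (hT : t₀ ≤ T) (x₀ : E) {K L : ℝ≥0}
    (hlip : ∀ t ∈ Icc t₀ T, LipschitzWith K (v t))
    (hcont : ∀ x, ContinuousOn (v · x) (Icc t₀ T))
    (hbound : ∀ t ∈ Icc t₀ T, ∀ x, ‖v t x‖ ≤ L) :
    ∃ α : ℝ → E, α t₀ = x₀ ∧
      ∀ t ∈ Icc t₀ T, HasDerivWithinAt α (v t (α t)) (Icc t₀ T) t :=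
  IsPicardLindelof.exists_eq_forall_mem_Icc_hasDerivWithinAt₀
    (t₀ := ⟨t₀, left_mem_Icc.2 hT⟩) (a := L * (T - t₀).toNNReal) (L := L) (K := K)
    { lipschitzOnWith := fun t ht => (hlip t ht).lipschitzOnWith
      continuousOn := fun x _ => hcont x
      norm_le := fun t ht x _ => hbound t ht x
      mul_max_le := by
        simp [Real.coe_toNNReal _ (sub_nonneg.2 hT), sub_nonneg.2 hT] }

/-- The system in the variables `(x₁, u) = (x₁, t² x₂)`, with `u` truncated to `[0, M]`. -/
noncomputable def truncatedLaneEmdenField (g : ℝ → ℝ) {M : ℝ} (hM : 0 ≤ M) (t : ℝ)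
    (p : ℝ × ℝ) : ℝ × ℝ :=
  ((t ^ 2)⁻¹ * projIcc 0 M hM p.2, t ^ 2 * g p.1)

section truncatedLaneEmdenField

variable {g : ℝ → ℝ} {M Z t : ℝ} (hM : 0 ≤ M)

lemma lipschitzWith_truncatedLaneEmdenField {Kg : ℝ≥0} (hg : LipschitzWith Kg g)
    (ht : t ∈ Icc 1 Z) :
    LipschitzWith (max 1 (‖Z ^ 2‖₊ * Kg)) (truncatedLaneEmdenField g hM t) := by
  have hσ : LipschitzWith 1 fun y => (projIcc 0 M hM y : ℝ) := by
    simpa [Function.comp_def] using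
      (LipschitzWith.subtype_val _).comp (LipschitzWith.projIcc hM)
  refine ((((lipschitzWith_smul (t ^ 2)⁻¹).comp hσ).comp LipschitzWith.prod_snd).prodMk
    (((lipschitzWith_smul (t ^ 2)).comp hg).comp LipschitzWith.prod_fst)).weaken ?_
  have h1 : 1 ≤ t := ht.1
  have hZ : 1 ≤ Z := h1.trans ht.2
  refine max_le_max ?_ ?_ <;> rw [← NNReal.coe_le_coe] <;> push_cast <;>
    simp only [norm_inv, norm_pow, Real.norm_eq_abs, abs_of_nonneg (zero_le_one.trans h1),
      abs_of_nonneg (zero_le_one.trans hZ), mul_one]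
  · exact inv_le_one_of_one_le₀ (one_le_pow₀ h1)
  · gcongr
    exact ht.2

lemma norm_truncatedLaneEmdenField_le {B : ℝ} (hgB : ∀ p, |g p| ≤ B) (ht : t ∈ Icc 1 Z)
    (p : ℝ × ℝ) : ‖truncatedLaneEmdenField g hM t p‖ ≤ max M (Z ^ 2 * B) := by
  have h1 : 1 ≤ t := ht.1
  have hσ : (projIcc 0 M hM p.2 : ℝ) ∈ Icc 0 M := (projIcc 0 M hM p.2).2
  have ht2 : (t ^ 2)⁻¹ ≤ 1 := inv_le_one_of_one_le₀ (one_le_pow₀ h1)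
  rw [truncatedLaneEmdenField, Prod.norm_def, Real.norm_eq_abs, Real.norm_eq_abs, abs_mul,
    abs_mul]
  refine max_le_max ?_ ?_
  · rw [abs_of_pos (by positivity), abs_of_nonneg hσ.1]
    nlinarith [hσ.1, hσ.2, inv_nonneg.2 (sq_nonneg t)]
  · rw [abs_of_nonneg (by positivity)]
    have := ht.2
    gcongr
    exact hgB p.1

lemma exists_truncatedLaneEmdenField_solution {Kg : ℝ≥0} {B : ℝ} (hg : LipschitzWith Kg g)
    (hgB : ∀ p, |g p| ≤ B) (hZ : 1 ≤ Z) (a : ℝ) :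
    ∃ x₁ u : ℝ → ℝ, x₁ 1 = a ∧ u 1 = 0 ∧ ∀ t ∈ Icc 1 Z,
      HasDerivWithinAt x₁ ((t ^ 2)⁻¹ * projIcc 0 M hM (u t)) (Icc 1 Z) t ∧
      HasDerivWithinAt u (t ^ 2 * g (x₁ t)) (Icc 1 Z) t := by
  have hcont : ∀ p, ContinuousOn (truncatedLaneEmdenField g hM · p) (Icc 1 Z) := fun p =>
    ((continuousOn_pow 2).inv₀ fun t ht => by have : (1:ℝ) ≤ t := ht.1; positivity).mul
      continuousOn_const |>.prodMk ((continuousOn_pow 2).mul continuousOn_const)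
  obtain ⟨α, hα₀, hα⟩ := exists_forall_mem_Icc_hasDerivWithinAt_of_lipschitzWith hZ (a, 0)
    (fun t ht => lipschitzWith_truncatedLaneEmdenField hM hg ht) hcont
    (fun t ht p => (norm_truncatedLaneEmdenField_le hM hgB ht p).trans (Real.le_coe_toNNReal _))
  refine ⟨fun t => (α t).1, fun t => (α t).2, by simp [hα₀], by simp [hα₀], fun t ht => ⟨?_, ?_⟩⟩
  · exact (ContinuousLinearMap.fst ℝ ℝ ℝ).hasFDerivAt.comp_hasDerivWithinAt t (hα t ht)
  · exact (ContinuousLinearMap.snd ℝ ℝ ℝ).hasFDerivAt.comp_hasDerivWithinAt t (hα t ht)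

end truncatedLaneEmdenField

lemma monotoneOn_Icc_of_hasDerivWithinAt_nonneg {f f' : ℝ → ℝ} {A B : ℝ}
    (hf : ∀ t ∈ Icc A B, HasDerivWithinAt f (f' t) (Icc A B) t)
    (hf' : ∀ t ∈ Icc A B, 0 ≤ f' t) : MonotoneOn f (Icc A B) :=
  monotoneOn_of_hasDerivWithinAt_nonneg (convex_Icc A B)
    (fun t ht => (hf t ht).continuousWithinAt)
    (fun t ht => (hf t (interior_subset ht)).mono interior_subset)
    (fun t ht => hf' t (interior_subset ht))

lemma sub_le_sub_of_hasDerivWithinAt_le {f g f' g' : ℝ → ℝ} {A B : ℝ}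
    (hf : ∀ t ∈ Icc A B, HasDerivWithinAt f (f' t) (Icc A B) t)
    (hg : ∀ t ∈ Icc A B, HasDerivWithinAt g (g' t) (Icc A B) t)
    (hle : ∀ t ∈ Icc A B, g' t ≤ f' t) {t : ℝ} (ht : t ∈ Icc A B) :
    g t - g A ≤ f t - f A := by
  have := monotoneOn_Icc_of_hasDerivWithinAt_nonneg (fun s hs => (hf s hs).sub (hg s hs))
    (fun s hs => sub_nonneg.2 (hle s hs)) (left_mem_Icc.2 (ht.1.trans ht.2)) ht ht.1
  simp only [Pi.sub_apply] at this
  linarith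

lemma mem_Icc_of_hasDerivWithinAt_sq_mul {u g : ℝ → ℝ} {μ B Z t : ℝ} (hμ : 0 ≤ μ)
    (hg : ∀ s ∈ Icc 1 Z, g s ∈ Icc μ B) (hu : u 1 = 0)
    (hd : ∀ s ∈ Icc 1 Z, HasDerivWithinAt u (s ^ 2 * g s) (Icc 1 Z) s) (ht : t ∈ Icc 1 Z) :
    u t ∈ Icc (μ * (t ^ 3 - 1) / 3) (Z ^ 2 * B * (t - 1)) := by
  have hlower := sub_le_sub_of_hasDerivWithinAt_le hd
    (fun s _ => (((hasDerivAt_pow 3 s).const_mul μ).div_const 3).hasDerivWithinAt)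
    (fun s hs => by nlinarith [(hg s hs).1]) ht
  have hupper := sub_le_sub_of_hasDerivWithinAt_le
    (fun s _ => ((hasDerivAt_id s).const_mul (Z ^ 2 * B)).hasDerivWithinAt) hd
    (fun s hs => ?_) ht
  · simp only [id, hu, mul_one] at hlower hupper
    constructor <;> linarith
  · have := hs.1
    have := hs.2
    have := hg s hs
    simp only [mul_one]
    gcongr
    exacts [hμ.trans this.1, this.2]

lemma truncatedLaneEmdenField_solution_estimates {g x₁ u : ℝ → ℝ} {a μ B Z : ℝ} (hμ : 0 < μ)
    (hg : ∀ p, g p ∈ Icc μ B) (hZ : 1 ≤ Z) (hM : 0 ≤ Z ^ 3 * B) (hx₁ : x₁ 1 = a) (hu : u 1 = 0)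
    (hd₁ : ∀ t ∈ Icc 1 Z,
      HasDerivWithinAt x₁ ((t ^ 2)⁻¹ * projIcc 0 (Z ^ 3 * B) hM (u t)) (Icc 1 Z) t)
    (hd₂ : ∀ t ∈ Icc 1 Z, HasDerivWithinAt u (t ^ 2 * g (x₁ t)) (Icc 1 Z) t) :
    MonotoneOn x₁ (Icc 1 Z) ∧ (∀ t ∈ Icc 1 Z, u t ∈ Icc 0 (Z ^ 3 * B)) ∧
      a + μ * (Z - 1) ^ 2 / 6 ≤ x₁ Z := by
  have hu_bounds : ∀ t ∈ Icc 1 Z, u t ∈ Icc (μ * (t ^ 3 - 1) / 3) (Z ^ 2 * B * (t - 1)) :=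
    fun t ht => mem_Icc_of_hasDerivWithinAt_sq_mul hμ.le (fun s _ => hg (x₁ s)) hu hd₂ ht
  have hu_mem : ∀ t ∈ Icc 1 Z, u t ∈ Icc 0 (Z ^ 3 * B) := by
    intro t ht
    obtain ⟨hlower, hupper⟩ := hu_bounds t ht
    have hB : 0 ≤ B := hμ.le.trans (hg 0).1 |>.trans (hg 0).2
    have ht3 : 1 ≤ t ^ 3 := one_le_pow₀ ht.1
    have hZt : 0 ≤ Z ^ 2 * B * (Z - (t - 1)) := by have := ht.2; have := ht.1; bound
    constructor <;> nlinarith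
  have hx₁_mono : MonotoneOn x₁ (Icc 1 Z) :=
    monotoneOn_Icc_of_hasDerivWithinAt_nonneg hd₁ fun t _ =>
      mul_nonneg (inv_nonneg.2 (sq_nonneg t)) (projIcc 0 _ hM (u t)).2.1
  have hx₁_lower := sub_le_sub_of_hasDerivWithinAt_le hd₁
    (fun s _ =>
      ((((hasDerivAt_id s).sub_const 1).fun_pow 2).const_mul μ |>.div_const 6).hasDerivWithinAt)
    (fun s hs => ?_) (right_mem_Icc.2 hZ)
  · refine ⟨hx₁_mono, hu_mem, ?_⟩
    simp only [id, hx₁] at hx₁_lower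
    linarith
  · have h1 : 1 ≤ s := hs.1
    rw [congrArg Subtype.val (projIcc_of_mem hM (hu_mem s hs)), le_inv_mul_iff₀ (by positivity)]
    norm_num
    nlinarith [(hu_bounds s hs).1, mul_nonneg hμ.le (by nlinarith : (0:ℝ) ≤ s ^ 2 - 1)]

lemma HasDerivWithinAt.div_sq_of_sq_mul {u : ℝ → ℝ} {φ t : ℝ} {s : Set ℝ} (ht : t ≠ 0)
    (hu : HasDerivWithinAt u (t ^ 2 * φ) s t) :
    HasDerivWithinAt (fun t => u t / t ^ 2) (φ - 2 * (u t / t ^ 2) / t) s t :=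
  (hu.div (hasDerivAt_pow 2 t).hasDerivWithinAt (pow_ne_zero 2 ht)).congr_deriv (by
    field_simp
    ring)

theorem exists_laneEmden_solution_of_lipschitzOnWith {F : ℝ → ℝ} {K : ℝ≥0} {a b μ : ℝ}
    (hab : a ≤ b) (hF : LipschitzOnWith K F (Icc a b)) (hμ : 0 < μ)
    (hFμ : ∀ p ∈ Icc a b, μ ≤ F p) :
    ∃ ζ₁, 1 ≤ ζ₁ ∧ ∃ x₁ x₂ : ℝ → ℝ, x₁ 1 = a ∧ x₂ 1 = 0 ∧ x₁ ζ₁ = b ∧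
      ∀ t ∈ Icc 1 ζ₁, HasDerivWithinAt x₁ (x₂ t) (Icc 1 ζ₁) t ∧
        HasDerivWithinAt x₂ (F (x₁ t) - 2 * x₂ t / t) (Icc 1 ζ₁) t := by
  obtain ⟨B, hFB⟩ := isCompact_Icc.bddAbove_image hF.continuousOn
  set g : ℝ → ℝ := fun p => F (projIcc a b hab p)
  have hg : LipschitzWith K g := by
    simpa [Function.comp_def] using hF.to_restrict.comp (LipschitzWith.projIcc hab)
  have hg_mem : ∀ p, g p ∈ Icc μ B := fun p =>
    ⟨hFμ _ (projIcc a b hab p).2, hFB (mem_image_of_mem F (projIcc a b hab p).2)⟩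
  have hB : 0 ≤ B := hμ.le.trans (hg_mem 0).1 |>.trans (hg_mem 0).2
  set Z := 2 + 6 * (b - a) / μ
  have hZ : 1 ≤ Z := by
    have : 0 ≤ 6 * (b - a) / μ := by bound
    linarith
  have hM : 0 ≤ Z ^ 3 * B := by positivity
  obtain ⟨x₁, u, hx₁, hu, hd⟩ := exists_truncatedLaneEmdenField_solution hM hg
    (fun p => abs_le.2 ⟨by linarith [(hg_mem p).1], (hg_mem p).2⟩) hZ a
  obtain ⟨hmono, hu_mem, hreach⟩ := truncatedLaneEmdenField_solution_estimates hμ hg_mem hZ hM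
    hx₁ hu (fun t ht => (hd t ht).1) (fun t ht => (hd t ht).2)
  have hb : b ≤ x₁ Z := by
    have hw : μ * (Z - 1) = μ + 6 * (b - a) := by simp only [Z]; field_simp; ring
    nlinarith
  obtain ⟨τ, hτ, hxτ⟩ := intermediate_value_Icc hZ (fun t ht => (hd t ht).1.continuousWithinAt)
    ⟨hx₁ ▸ hab, hb⟩
  have hsub : Icc 1 τ ⊆ Icc 1 Z := Icc_subset_Icc_right hτ.2
  refine ⟨τ, hτ.1, x₁, fun t => u t / t ^ 2, hx₁, by simp [hu], hxτ, fun t ht => ?_⟩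
  have hx₁_mem : x₁ t ∈ Icc a b :=
    ⟨hx₁ ▸ hmono (left_mem_Icc.2 hZ) (hsub ht) ht.1, hxτ ▸ hmono (hsub ht) hτ ht.2⟩
  have hσ : (projIcc 0 (Z ^ 3 * B) hM (u t) : ℝ) = u t :=
    congrArg Subtype.val (projIcc_of_mem hM (hu_mem t (hsub ht)))
  have hg_eq : g (x₁ t) = F (x₁ t) :=
    congrArg F (congrArg Subtype.val (projIcc_of_mem hab hx₁_mem))
  refine ⟨((hd t (hsub ht)).1.mono hsub).congr_deriv (by simp only [hσ, div_eq_inv_mul]), ?_⟩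
  exact hg_eq ▸ ((hd t (hsub ht)).2.mono hsub).div_sq_of_sq_mul (by linarith [ht.1])

lemma mul_rpow_neg_one_div_pow {Ω : ℝ} (hΩ : 0 < Ω) {n : ℕ} (hn : n ≠ 0) :
    Ω * (Ω ^ (-1 / (n : ℝ))) ^ n = 1 := by
  rw [← Real.rpow_natCast, ← Real.rpow_mul hΩ.le, div_mul_cancel₀ _ (Nat.cast_ne_zero.2 hn),
    Real.rpow_neg_one, mul_inv_cancel₀ hΩ.ne']

lemma one_lt_mul_add_rpow_neg_one_div_pow {Ω p : ℝ} (hΩ : 0 < Ω) (hp : 0 < p) {n : ℕ}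
    (hn : n ≠ 0) : 1 < Ω * (p + Ω ^ (-1 / (n : ℝ))) ^ n := by
  calc 1 = Ω * (Ω ^ (-1 / (n : ℝ))) ^ n := (mul_rpow_neg_one_div_pow hΩ hn).symm
    _ < Ω * (p + Ω ^ (-1 / (n : ℝ))) ^ n := by gcongr; linarith

theorem laneEmden_odd_equilibrium_unstable_general
    (n : ℕ) (hn : 1 ≤ n) (Ω : ℝ) (hΩ : 0 < Ω) :
    ∃ ζ₀ : ℝ, 0 < ζ₀ ∧ ∃ ε : ℝ, 0 < ε ∧
      ∀ δ : ℝ, 0 < δ →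
        ∃ ζ₁ : ℝ, ζ₀ ≤ ζ₁ ∧ ∃ x₁ x₂ : ℝ → ℝ,
          IsSolShiftedOddOn n Ω ζ₀ ζ₁ x₁ x₂ ∧
          0 < Real.sqrt (x₁ ζ₀ ^ 2 + x₂ ζ₀ ^ 2) ∧
          Real.sqrt (x₁ ζ₀ ^ 2 + x₂ ζ₀ ^ 2) < δ ∧
          ε ≤ Real.sqrt (x₁ ζ₁ ^ 2 + x₂ ζ₁ ^ 2) := by
  refine ⟨1, one_pos, 1, one_pos, fun δ hδ => ?_⟩
  set F : ℝ → ℝ := fun p => 1 / ((n : ℝ) + 1) * (Ω * (p + Ω ^ (-1 / (n : ℝ))) ^ n - 1)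
  set a := min (δ / 2) 1
  have ha : 0 < a := by positivity
  have hFa : 0 < F a :=
    mul_pos (by positivity) (sub_pos.2 (one_lt_mul_add_rpow_neg_one_div_pow hΩ ha (by omega)))
  have hF_mono : ∀ p ∈ Icc a 1, F a ≤ F p := fun p hp => by
    simp only [F]
    gcongr
    exact hp.1
  obtain ⟨K, hK⟩ : ∃ K, LipschitzOnWith K F (Icc a 1) :=
    (ContDiff.locallyLipschitz (𝕂 := ℝ) (by fun_prop)).locallyLipschitzOn
      |>.exists_lipschitzOnWith_of_compact isCompact_Icc
  obtain ⟨ζ₁, hζ₁, x₁, x₂, hx₁, hx₂, hreach, hsol⟩ :=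
    exists_laneEmden_solution_of_lipschitzOnWith (min_le_right _ _) hK hFa hF_mono
  have hstart : Real.sqrt (x₁ 1 ^ 2 + x₂ 1 ^ 2) = a := by
    rw [hx₁, hx₂, zero_pow two_ne_zero, add_zero, Real.sqrt_sq ha.le]
  refine ⟨ζ₁, hζ₁, x₁, x₂, hsol, hstart ▸ ha, hstart ▸ ?_, ?_⟩
  · exact (min_le_left _ _).trans_lt (half_lt_self hδ)
  · rw [hreach, Real.one_le_sqrt, one_pow]
    exact le_add_of_nonneg_right (sq_nonneg _)

/-- For n odd and Ω > 0, the origin is an unstable equilibrium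
of the shifted odd system: there exist ζ₀ > 0 and ε > 0 such that for every
δ > 0 some solution starts within Euclidean distance δ (but not at) the origin
at ζ₀ and reaches distance at least ε at some ζ₁. -/
theorem laneEmden_odd_equilibrium_unstable
    (n : ℕ) (hn : 1 ≤ n) (hno : Odd n) (Ω : ℝ) (hΩ : 0 < Ω) :
    ∃ ζ₀ : ℝ, 0 < ζ₀ ∧ ∃ ε : ℝ, 0 < ε ∧
      ∀ δ : ℝ, 0 < δ →
        ∃ ζ₁ : ℝ, ζ₀ ≤ ζ₁ ∧ ∃ x₁ x₂ : ℝ → ℝ,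
          IsSolShiftedOddOn n Ω ζ₀ ζ₁ x₁ x₂ ∧
          0 < Real.sqrt (x₁ ζ₀ ^ 2 + x₂ ζ₀ ^ 2) ∧
          Real.sqrt (x₁ ζ₀ ^ 2 + x₂ ζ₀ ^ 2) < δ ∧
          ε ≤ Real.sqrt (x₁ ζ₁ ^ 2 + x₂ ζ₁ ^ 2) :=
  laneEmden_odd_equilibrium_unstable_general n hn Ω hΩ
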